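/- arXiv:2310.12942 — 2 statements merged into one kernel-verified Lean document; each statement's English description precedes it below -/
import Mathlib

section
/- Popping a 0 from a stack can be computed by one saturated-sigmoid affine step: for every nonempty binary stack γ whose top symbol is 0, σ(10·enc(γ) − 1) = enc(γ'), where γ' is the stack obtained from γ by removing its top symbol. -/
/-- Digit encoding of a stack symbol: `d 0 = 1`, `d 1 = 3`. -/
def d (b : Bool) : ℚ := if b then 3 else 1

/-- Base-ten encoding of a binary stack (top symbol is the last element):
`enc (γ₁ ⋯ γ_N) = Σ_{i=1}^N d(γᵢ) · 10^{-(N-i+1)}`. -/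
def enc (γ : List Bool) : ℚ := γ.foldl (fun acc b => acc / 10 + d b / 10) 0

/-- The saturated sigmoid. -/
def sat (x : ℚ) : ℚ := if x < 0 then 0 else if x ≤ 1 then x else 1

/-! Multiplying by 10 shifts the encoding by one digit, so `10 · enc (γ' ++ [0]) - d 0 = enc γ'`;
since every encoding lies in `[0, 1/2]`, the saturated sigmoid acts as the identity there. -/

lemma d_nonneg (b : Bool) : 0 ≤ d b := by
  cases b <;> norm_num [d]

lemma d_le_three (b : Bool) : d b ≤ 3 := by
  cases b <;> norm_num [d]

lemma sat_of_mem_Icc {x : ℚ} (hx : x ∈ Set.Icc 0 1) : sat x = x := by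
  rw [sat, if_neg (not_lt.mpr hx.1), if_pos hx.2]

lemma enc_concat (γ : List Bool) (b : Bool) : enc (γ ++ [b]) = enc γ / 10 + d b / 10 :=
  List.foldl_concat _ _ _ _

lemma enc_mem_Icc (γ : List Bool) : enc γ ∈ Set.Icc 0 (1 / 2) := by
  induction γ using List.reverseRecOn with
  | nil => norm_num [enc]
  | append_singleton γ b ih =>
    rw [enc_concat]
    constructor <;> linarith [ih.1, ih.2, d_nonneg b, d_le_three b]

lemma ten_mul_enc_concat_sub (γ : List Bool) (b : Bool) :
    10 * enc (γ ++ [b]) - d b = enc γ := by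
  rw [enc_concat]
  ring

theorem pop_zero (γ : List Bool) (h : γ.getLast? = some false) :
    sat (10 * enc γ - 1) = enc γ.dropLast := by
  obtain ⟨γ', rfl⟩ := List.getLast?_eq_some_iff.mp h
  have hpop : 10 * enc (γ' ++ [false]) - 1 = enc γ' := ten_mul_enc_concat_sub γ' false
  have hγ' := enc_mem_Icc γ'
  rw [hpop, List.dropLast_concat, sat_of_mem_Icc ⟨hγ'.1, hγ'.2.trans (by norm_num)⟩]
end

section
/- Popping a 1 from a stack can be computed by one saturated-sigmoid affine step: for every nonempty binary stack γ whose top symbol is 1, σ(10·enc(γ) − 3) = enc(γ'), where γ' is the stack obtained from γ by removing its top symbol. -/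
lemma foldl_bound (l : List Bool) : ∀ a : ℚ, 0 ≤ a → a ≤ 1/2 →
    0 ≤ l.foldl (fun acc b => acc / 10 + d b / 10) a ∧
    l.foldl (fun acc b => acc / 10 + d b / 10) a ≤ 1/2 := by
  induction l with
  | nil => intro a h1 h2; exact ⟨h1, h2⟩
  | cons b t ih =>
    intro a h1 h2
    apply ih
    · have : (0:ℚ) ≤ d b := by cases b <;> simp [d]
      positivity
    · have : d b ≤ 3 := by cases b <;> simp [d]
      linarith

lemma enc_bounds (l : List Bool) : 0 ≤ enc l ∧ enc l ≤ 1/2 :=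
  foldl_bound l 0 le_rfl (by norm_num)

theorem pop_one (γ : List Bool) (h : γ.getLast? = some true) :
    sat (10 * enc γ - 3) = enc γ.dropLast := by
  have hne : γ ≠ [] := by rintro rfl; simp at h
  have hlast : γ.getLast hne = true := by
    rwa [List.getLast?_eq_getLast hne, Option.some_inj] at h
  have hγ : γ = γ.dropLast ++ [true] := by
    conv_lhs => rw [← List.dropLast_append_getLast hne, hlast]
  have henc : enc γ = enc γ.dropLast / 10 + 3 / 10 := by
    rw [hγ]; simp [enc, List.foldl_append, d]
  obtain ⟨h0, h1⟩ := enc_bounds γ.dropLast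
  rw [henc, sat]
  rw [if_neg (by linarith), if_pos (by linarith)]
  ring
end
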